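/- arXiv:2406.15915 — 7 statements merged into one kernel-verified Lean document; each statement's English description precedes it below -/
import Mathlib

section
/- Let k be a field of characteristic zero, N ≥ 2 an integer, d_1,…,d_N, h positive integers with h ≠ d_1 + ⋯ + d_N, and let W ∈ k[X_1,…,X_N] be a weighted homogeneous polynomial of degree h with respect to the weights d_1,…,d_N (i.e. every monomial X_1^{α_1}⋯X_N^{α_N} occurring in W satisfies d_1α_1 + ⋯ + d_Nα_N = h). If a point a = (a_1,…,a_N) ∈ k^N satisfies W(a) = a_1⋯a_N and (∂W/∂X_j)(a) = ∏_{l≠j} a_l for every j ∈ {1,…,N}, then W(a) = 0 and a_1⋯a_N = 0. -/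
open MvPolynomial

lemma key_mono {k : Type*} [CommRing k] {N : ℕ} (m : Fin N →₀ ℕ) (c : k) (i : Fin N)
    (a : Fin N → k) :
    a i * eval a (pderiv i (monomial m c)) = (m i : k) * eval a (monomial m c) := by
  classical
  rw [pderiv_monomial, eval_monomial, eval_monomial, Finsupp.prod_pow, Finsupp.prod_pow]
  rcases Nat.eq_zero_or_pos (m i) with h0 | h0
  · simp [h0]
  · rw [← Finset.mul_prod_erase Finset.univ _ (Finset.mem_univ i),
        ← Finset.mul_prod_erase Finset.univ (fun j => a j ^ m j) (Finset.mem_univ i)]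
    have hprod : ∏ j ∈ Finset.univ.erase i, a j ^ (((m - Finsupp.single i 1 : Fin N →₀ ℕ)) j)
        = ∏ j ∈ Finset.univ.erase i, a j ^ m j := by
      refine Finset.prod_congr rfl fun j hj => ?_
      have hji : j ≠ i := (Finset.mem_erase.mp hj).1
      simp [Finsupp.tsub_apply, Finsupp.single_apply, Ne.symm hji]
    have hpow : a i * a i ^ (((m - Finsupp.single i 1 : Fin N →₀ ℕ)) i) = a i ^ m i := by
      rw [Finsupp.tsub_apply, Finsupp.single_apply, if_pos rfl, ← pow_succ',
        Nat.sub_add_cancel h0]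
    rw [hprod]
    calc a i * (c * (m i : k) * (a i ^ (((m - Finsupp.single i 1 : Fin N →₀ ℕ)) i) *
            ∏ j ∈ Finset.univ.erase i, a j ^ m j))
        = (m i : k) * (c * ((a i * a i ^ (((m - Finsupp.single i 1 : Fin N →₀ ℕ)) i)) *
            ∏ j ∈ Finset.univ.erase i, a j ^ m j)) := by ring
      _ = _ := by rw [hpow]

lemma euler {k : Type*} [CommRing k] {N : ℕ} (d : Fin N → ℕ) (h : ℕ)
    (W : MvPolynomial (Fin N) k) (hW : W.IsWeightedHomogeneous d h) (a : Fin N → k) :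
    ∑ i, (d i : k) * (a i * eval a (pderiv i W)) = (h : k) * eval a W := by
  classical
  conv_lhs => rw [W.as_sum]
  conv_rhs => rw [W.as_sum]
  simp only [map_sum, Finset.mul_sum]
  rw [Finset.sum_comm]
  refine Finset.sum_congr rfl fun m hm => ?_
  have hdeg : (Finsupp.weight d) m = h := hW (mem_support_iff.mp hm)
  have : ∑ i, (d i : k) * ((m i : k) * eval a (monomial m (coeff m W)))
      = (h : k) * eval a (monomial m (coeff m W)) := by
    simp only [← mul_assoc]
    rw [← Finset.sum_mul]
    congr 1
    have : ∑ i, (d i : k) * (m i : k) = ((∑ i, m i * d i : ℕ) : k) := by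
      push_cast; exact Finset.sum_congr rfl fun i _ => mul_comm _ _
    rw [this]
    congr 1
    rw [← hdeg, Finsupp.weight_apply, Finsupp.sum_fintype]
    · exact Finset.sum_congr rfl fun i _ => (smul_eq_mul (m i) (d i)).symm ▸ rfl
    · intro i; simp
  rw [← this]
  exact Finset.sum_congr rfl fun i _ => by rw [key_mono]

/-- If `W` is weighted homogeneous of degree `h ≠ d₁ + ⋯ + d_N` with respect to positive
weights `d`, and `a` satisfies the singular-locus equations of `{W = X₁⋯X_N}`, then
`W(a) = 0` and `a₁⋯a_N = 0`. -/
theorem stmt0 (k : Type*) [Field k] [CharZero k] (N : ℕ) (hN : 2 ≤ N)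
    (d : Fin N → ℕ) (hd : ∀ i, 0 < d i) (h : ℕ) (hh : 0 < h)
    (hCY : h ≠ ∑ i, d i)
    (W : MvPolynomial (Fin N) k)
    (hW : W.IsWeightedHomogeneous d h)
    (a : Fin N → k)
    (h1 : eval a W = ∏ i, a i)
    (h2 : ∀ j : Fin N, eval a (pderiv j W) = ∏ l ∈ Finset.univ.erase j, a l) :
    eval a W = 0 ∧ ∏ i, a i = 0 := by
  have he := euler d h W hW a
  have hlhs : ∑ i, (d i : k) * (a i * eval a (pderiv i W))
      = ((∑ i, d i : ℕ) : k) * ∏ i, a i := by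
    push_cast
    rw [Finset.sum_mul]
    refine Finset.sum_congr rfl fun i _ => ?_
    rw [h2 i, Finset.mul_prod_erase Finset.univ a (Finset.mem_univ i)]
  rw [hlhs, h1] at he
  have hne : ((∑ i, d i : ℕ) : k) - (h : k) ≠ 0 := by
    rw [sub_ne_zero]
    intro hc
    exact hCY (by exact_mod_cast hc.symm)
  have : (((∑ i, d i : ℕ) : k) - (h : k)) * ∏ i, a i = 0 := by
    rw [sub_mul, he, sub_self]
  have hP : ∏ i, a i = 0 := by
    rcases mul_eq_zero.mp this with hc | hc
    · exact absurd hc hne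
    · exact hc
  exact ⟨h1.trans hP, hP⟩
end

section
/- Let k be a field of characteristic zero, N ≥ 2 an integer, and p_1,…,p_N integers with p_j ≥ 2 for all j and Σ_{j=1}^N 1/p_j ≠ 1. If a point a = (a_1,…,a_N) ∈ k^N satisfies a_1^{p_1} + ⋯ + a_N^{p_N} = a_1⋯a_N and p_j·a_j^{p_j−1} = ∏_{l≠j} a_l for every j ∈ {1,…,N}, then a = 0. In other words, the singular locus of the affine hypersurface {x ∈ k^N : x_1^{p_1} + ⋯ + x_N^{p_N} − x_1⋯x_N = 0} (the set of its points at which all partial derivatives of the defining polynomial vanish) is the origin. -/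
open MvPolynomial

/-- For a Brieskorn–Pham polynomial `W = X₁^{p₁} + ⋯ + X_N^{p_N}` not of Calabi–Yau type
(`Σ 1/pⱼ ≠ 1`), the singular locus of the hypersurface `{W = X₁⋯X_N}` is the origin. -/
theorem stmt1 (k : Type*) [Field k] [CharZero k] (N : ℕ) (hN : 2 ≤ N)
    (p : Fin N → ℕ) (hp : ∀ j, 2 ≤ p j)
    (hCY : (∑ j, (1 : ℚ) / (p j : ℚ)) ≠ 1)
    (a : Fin N → k)
    (h1 : ∑ j, a j ^ p j = ∏ j, a j)
    (h2 : ∀ j : Fin N, (p j : k) * a j ^ (p j - 1) = ∏ l ∈ Finset.univ.erase j, a l) :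
    a = 0 := by
  have hp0 : ∀ j, (p j : k) ≠ 0 := fun j => Nat.cast_ne_zero.mpr (by have := hp j; omega)
  set P := ∏ j, a j with hP
  have key : ∀ j, a j ^ p j = (p j : k)⁻¹ * P := by
    intro j
    have h3 : (p j : k) * a j ^ (p j - 1) * a j = a j * ∏ l ∈ Finset.univ.erase j, a l := by
      rw [h2 j]; ring
    rw [Finset.mul_prod_erase _ _ (Finset.mem_univ j)] at h3
    have hpow : a j ^ (p j - 1) * a j = a j ^ p j := by
      rw [← pow_succ]
      congr 1
      have := hp j; omega
    have h4 : (p j : k) * a j ^ p j = P := by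
      rw [hP, ← h3, ← hpow]; ring
    rw [inv_mul_eq_div, eq_div_iff (hp0 j), mul_comm]; exact h4
  have hsum : P = (∑ j, (p j : k)⁻¹) * P := by
    conv_lhs => rw [← h1]
    rw [Finset.sum_mul]
    exact Finset.sum_congr rfl fun j _ => key j
  have hne : (∑ j, (p j : k)⁻¹) ≠ 1 := by
    intro h
    apply hCY
    have : ((∑ j, (1 : ℚ) / (p j : ℚ) : ℚ) : k) = ((1 : ℚ) : k) := by
      push_cast
      simpa [one_div] using h
    exact_mod_cast this
  have hPz : P = 0 := by
    by_contra hPne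
    apply hne
    have h5 : (1 : k) * P = (∑ j, (p j : k)⁻¹) * P := by rw [one_mul]; exact hsum
    exact (mul_right_cancel₀ hPne h5).symm
  obtain ⟨i, _, hi⟩ := Finset.prod_eq_zero_iff.mp hPz
  funext j
  simp only [Pi.zero_apply]
  by_cases hji : j = i
  · subst hji; exact hi
  · have hmem : i ∈ Finset.univ.erase j := Finset.mem_erase.mpr ⟨Ne.symm hji, Finset.mem_univ i⟩
    have : (p j : k) * a j ^ (p j - 1) = 0 := by
      rw [h2 j]; exact Finset.prod_eq_zero hmem hi
    have h4 : a j ^ (p j - 1) = 0 := by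
      rcases mul_eq_zero.mp this with h | h
      · exact absurd h (hp0 j)
      · exact h
    exact pow_eq_zero_iff (by have := hp j; omega) |>.mp h4
end

section
/- Let k be a field of characteristic zero, N ≥ 2 an integer, and p_1,…,p_N integers with p_j ≥ 2 for all j. Then the set of points (x_0, a) ∈ k × k^N satisfying a_1^{p_1} + ⋯ + a_N^{p_N} = x_0·a_1⋯a_N, a_1⋯a_N = 0, and p_j·a_j^{p_j−1} = x_0·∏_{l≠j} a_l for every j ∈ {1,…,N}, is exactly the x_0-axis {(x_0, 0,…,0) : x_0 ∈ k}. Equivalently, the singular locus of the hypersurface {x_1^{p_1} + ⋯ + x_N^{p_N} − x_0x_1⋯x_N = 0} ⊂ k^{N+1} is the x_0-axis. -/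
/-- For a Brieskorn–Pham polynomial `W = X₁^{p₁} + ⋯ + X_N^{p_N}` with all `pⱼ ≥ 2`, the
singular locus of the hypersurface `{W(x₁,…,x_N) = x₀ x₁ ⋯ x_N} ⊂ k^{N+1}` is the `x₀`-axis. -/
theorem stmt3 (k : Type*) [Field k] [CharZero k] (N : ℕ) (hN : 2 ≤ N)
    (p : Fin N → ℕ) (hp : ∀ j, 2 ≤ p j) :
    {q : k × (Fin N → k) |
        (∑ j, q.2 j ^ p j) = q.1 * ∏ j, q.2 j ∧
        (∏ j, q.2 j) = 0 ∧
        ∀ j : Fin N, (p j : k) * q.2 j ^ (p j - 1) = q.1 * ∏ l ∈ Finset.univ.erase j, q.2 l} =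
      {q : k × (Fin N → k) | q.2 = 0} := by
  ext q
  simp only [Set.mem_setOf_eq]
  constructor
  · rintro ⟨h1, h2, h3⟩
    obtain ⟨i, -, hi⟩ := Finset.prod_eq_zero_iff.mp h2
    funext j
    rcases eq_or_ne j i with rfl | hji
    · exact hi
    · have hprod : ∏ l ∈ Finset.univ.erase j, q.2 l = 0 :=
        Finset.prod_eq_zero (Finset.mem_erase.mpr ⟨Ne.symm hji, Finset.mem_univ i⟩) hi
      have h := h3 j
      rw [hprod, mul_zero] at h
      have hpj : (p j : k) ≠ 0 := Nat.cast_ne_zero.mpr (by have := hp j; omega)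
      have := (mul_eq_zero.mp h).resolve_left hpj
      exact pow_eq_zero_iff (by have := hp j; omega) |>.mp this
  · intro h
    have hz : ∀ j, q.2 j = 0 := fun j => congrFun h j
    have hi : (⟨0, by omega⟩ : Fin N) ∈ (Finset.univ : Finset (Fin N)) := Finset.mem_univ _
    have hprod : ∏ j, q.2 j = 0 := Finset.prod_eq_zero hi (hz _)
    have hsum : ∑ j, q.2 j ^ p j = 0 :=
      Finset.sum_eq_zero fun j _ => by rw [hz j, zero_pow (by have := hp j; omega)]
    refine ⟨by rw [hsum, hprod, mul_zero], hprod, fun j => ?_⟩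
    obtain ⟨l, -, hl⟩ := Finset.exists_mem_ne
      (s := (Finset.univ : Finset (Fin N))) (by simp; omega) j
    rw [hz j, zero_pow (by have := hp j; omega), mul_zero,
      Finset.prod_eq_zero (Finset.mem_erase.mpr ⟨hl, Finset.mem_univ l⟩) (hz l), mul_zero]
end

section
/- Let k be a field of characteristic zero and n ≥ 1. In the formal power series ring k⟦X_1,…,X_{n+2}⟧ there exists g with constant term 1 satisfying g² = 1 − (1/4)·(X_1⋯X_n)², and for any w ∈ k⟦X_1,…,X_n⟧ (viewed in k⟦X_1,…,X_{n+2}⟧) one has the identity w + (g·X_{n+1})² + (X_{n+2} − (1/2)·X_1⋯X_{n+1})² = w + X_{n+1}² + X_{n+2}² − X_1⋯X_{n+2}. -/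
open MvPowerSeries

/-- Coefficients of the formal square root of `1 - X`. -/
noncomputable def sqCoeff (k : Type*) [Field k] : ℕ → k
  | 0 => 1
  | (m+1) => -(2:k)⁻¹ * ((if m = 0 then 1 else 0) +
      ∑ i ∈ (Finset.Ioo 0 (m+1)).attach, sqCoeff k i.1 * sqCoeff k (m+1 - i.1))
  decreasing_by
  all_goals (have h := i.2; simp only [Finset.mem_Ioo] at h; omega)

theorem sqCoeff_zero (k : Type*) [Field k] : sqCoeff k 0 = 1 := by rw [sqCoeff]

theorem sqCoeff_conv (k : Type*) [Field k] [CharZero k] (m : ℕ) :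
    ∑ p ∈ Finset.HasAntidiagonal.antidiagonal m, sqCoeff k p.1 * sqCoeff k p.2 =
      if m = 0 then 1 else if m = 1 then -1 else 0 := by
  cases m with
  | zero => simp [sqCoeff_zero]
  | succ m =>
    rw [Finset.Nat.sum_antidiagonal_eq_sum_range_succ_mk, Finset.sum_range_succ]
    have h0 : (0:ℕ) ∈ Finset.range (m+1) := by simp
    rw [← Finset.add_sum_erase _ _ h0]
    have herase : (Finset.range (m+1)).erase 0 = Finset.Ioo 0 (m+1) := by
      rw [Finset.range_eq_Ico, Finset.Ico_erase_left]
    rw [herase]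
    have hdef : sqCoeff k (m+1) = -(2:k)⁻¹ * ((if m = 0 then 1 else 0) +
        ∑ i ∈ Finset.Ioo 0 (m+1), sqCoeff k i * sqCoeff k (m+1 - i)) := by
      rw [sqCoeff, Finset.sum_attach (Finset.Ioo 0 (m+1))
        (fun i => sqCoeff k i * sqCoeff k (m+1 - i))]
    set S := ∑ i ∈ Finset.Ioo 0 (m+1), sqCoeff k i * sqCoeff k (m+1 - i) with hS
    simp only [Nat.sub_zero, Nat.sub_self, sqCoeff_zero, one_mul, mul_one]
    rw [hdef]
    have h2 : (2:k) ≠ 0 := two_ne_zero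
    cases m with
    | zero => simp only [if_pos rfl]; field_simp; norm_num; ring
    | succ m => simp only [Nat.succ_ne_zero, if_false, Nat.succ_ne_self]
                field_simp
                norm_num
                ring

/-- Existence of a formal square root of `1 - monomial D 4⁻¹`. -/
theorem exists_sqrt (k : Type*) [Field k] [CharZero k] {σ : Type*} (D : σ →₀ ℕ)
    (hD : D ≠ 0) :
    ∃ g : MvPowerSeries σ k, constantCoeff (σ := σ) (R := k) g = 1 ∧
      g ^ 2 = 1 - monomial (R := k) D (4⁻¹ : k) := by
  classical
  obtain ⟨j0, hj0⟩ : ∃ j, D j ≠ 0 := by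
    by_contra h
    push_neg at h
    exact hD (Finsupp.ext h)
  set c := D j0 with hc
  have hcpos : 0 < c := Nat.pos_of_ne_zero hj0
  have huniq : ∀ a b : ℕ, a • D = b • D → a = b := by
    intro a b hab
    have h := DFunLike.congr_fun hab j0
    simp only [Finsupp.smul_apply, smul_eq_mul] at h
    exact Nat.eq_of_mul_eq_mul_right hcpos h
  set g : MvPowerSeries σ k :=
    (fun e => if e = (e j0 / c) • D then sqCoeff k (e j0 / c) * (4:k)⁻¹ ^ (e j0 / c) else 0)
    with hgdef
  have hcoeff : ∀ e : σ →₀ ℕ, coeff (R := k) e g =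
      if e = (e j0 / c) • D then sqCoeff k (e j0 / c) * (4:k)⁻¹ ^ (e j0 / c) else 0 :=
    fun e => rfl
  have hsmul_apply : ∀ m : ℕ, (m • D) j0 = m * c := by
    intro m; simp [Finsupp.smul_apply, mul_comm, hc]
  have hgm : ∀ m : ℕ, coeff (R := k) (m • D) g = sqCoeff k m * (4:k)⁻¹ ^ m := by
    intro m
    rw [hcoeff]
    have hm : (m • D) j0 / c = m := by rw [hsmul_apply, Nat.mul_div_cancel _ hcpos]
    rw [hm, if_pos rfl]
  have hg0 : ∀ e : σ →₀ ℕ, (¬ ∃ m : ℕ, e = m • D) → coeff (R := k) e g = 0 := by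
    intro e he
    rw [hcoeff, if_neg]
    intro h
    exact he ⟨_, h⟩
  refine ⟨g, ?_, ?_⟩
  · have h0 : (0 : σ →₀ ℕ) = (0 : ℕ) • D := by rw [zero_smul]
    rw [← coeff_zero_eq_constantCoeff_apply, h0, hgm, sqCoeff_zero, pow_zero, mul_one]
  · rw [pow_two]
    ext e
    rw [coeff_mul, map_sub, coeff_one, coeff_monomial]
    by_cases he : ∃ m : ℕ, e = m • D
    · obtain ⟨m, rfl⟩ := he
      have key : ∑ p ∈ Finset.HasAntidiagonal.antidiagonal (m • D), coeff (R := k) p.1 g * coeff (R := k) p.2 g =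
          ∑ p ∈ Finset.HasAntidiagonal.antidiagonal m,
            (sqCoeff k p.1 * (4:k)⁻¹ ^ p.1) * (sqCoeff k p.2 * (4:k)⁻¹ ^ p.2) := by
        refine (Finset.sum_of_injOn (fun p => (p.1 • D, p.2 • D)) ?_ ?_ ?_ ?_).symm
        · intro p _ q _ hpq
          simp only [Prod.mk.injEq] at hpq
          exact Prod.ext (huniq _ _ hpq.1) (huniq _ _ hpq.2)
        · intro p hp
          simp only [Finset.coe_sort_coe, Finset.mem_coe, Finset.HasAntidiagonal.mem_antidiagonal] at hp ⊢
          rw [← add_smul, hp]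
        · intro q hq hq'
          rw [Finset.HasAntidiagonal.mem_antidiagonal] at hq
          by_cases h1 : ∃ a : ℕ, q.1 = a • D
          · by_cases h2 : ∃ b : ℕ, q.2 = b • D
            · obtain ⟨a, ha⟩ := h1
              obtain ⟨b, hb⟩ := h2
              exfalso
              apply hq'
              have hab : a + b = m := by
                apply huniq
                rw [add_smul, ← ha, ← hb, hq]
              refine ⟨(a, b), ?_, ?_⟩
              · simp only [Finset.coe_sort_coe, Finset.mem_coe, Finset.HasAntidiagonal.mem_antidiagonal]
                exact hab
              · exact Prod.ext ha.symm hb.symm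
            · rw [hg0 _ h2, mul_zero]
          · rw [hg0 _ h1, zero_mul]
        · intro p _
          rw [hgm, hgm]
      rw [key]
      have key2 : ∑ p ∈ Finset.HasAntidiagonal.antidiagonal m,
          (sqCoeff k p.1 * (4:k)⁻¹ ^ p.1) * (sqCoeff k p.2 * (4:k)⁻¹ ^ p.2) =
          (4:k)⁻¹ ^ m * (if m = 0 then 1 else if m = 1 then -1 else 0) := by
        rw [← sqCoeff_conv k m, Finset.mul_sum]
        refine Finset.sum_congr rfl ?_
        intro p hp
        rw [Finset.HasAntidiagonal.mem_antidiagonal] at hp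
        rw [← hp, pow_add]
        ring
      rw [key2]
      have hDne0 : ∀ a b : ℕ, a ≠ b → a • D ≠ b • D := by
        intro a b hab h
        exact hab (huniq _ _ h)
      match m with
      | 0 =>
        rw [if_pos rfl, zero_smul]
        rw [if_pos rfl, if_neg (by intro h; exact hD h.symm)]
        simp
      | 1 =>
        have h1 : (1:ℕ) • D = D := one_smul _ _
        rw [if_neg (by simp), if_pos rfl, h1]
        rw [if_neg (by intro h; exact hj0 (by rw [hc, h]; simp)), if_pos rfl]
        simp
      | (m+2) =>
        rw [if_neg (by simp), if_neg (by simp)]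
        rw [if_neg, if_neg]
        · ring
        · intro h
          have := huniq (m+2) 1 (by rw [h, one_smul])
          omega
        · intro h
          have := huniq (m+2) 0 (by rw [h, zero_smul])
          omega
    · have hz : ∑ p ∈ Finset.HasAntidiagonal.antidiagonal e, coeff (R := k) p.1 g * coeff (R := k) p.2 g = 0 := by
        refine Finset.sum_eq_zero ?_
        intro p hp
        rw [Finset.HasAntidiagonal.mem_antidiagonal] at hp
        by_cases h1 : ∃ a : ℕ, p.1 = a • D
        · by_cases h2 : ∃ b : ℕ, p.2 = b • D
          · obtain ⟨a, ha⟩ := h1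
            obtain ⟨b, hb⟩ := h2
            exact absurd ⟨a + b, by rw [add_smul, ← ha, ← hb, hp]⟩ he
          · rw [hg0 _ h2, mul_zero]
        · rw [hg0 _ h1, zero_mul]
      rw [hz, if_neg, if_neg]
      · ring
      · intro h
        exact he ⟨1, by rw [h, one_smul]⟩
      · intro h
        exact he ⟨0, by rw [h, zero_smul]⟩

theorem prod_X_monomial {σ R : Type*} [DecidableEq σ] [CommSemiring R] {ι : Type*}
    (s : Finset ι) (f : ι → σ) :
    (∏ i ∈ s, (X (f i) : MvPowerSeries σ R)) =
      monomial (R := R) (∑ i ∈ s, Finsupp.single (f i) 1) 1 := by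
  induction s using Finset.cons_induction with
  | empty => simp [monomial_zero_one]
  | cons a s ha ih =>
    rw [Finset.prod_cons, Finset.sum_cons, ih, X_def, monomial_mul_monomial, one_mul]

/-- In `k⟦X₁,…,X_{n+2}⟧` there is a formal square root `g` of `1 - (1/4)(X₁⋯X_n)²` with
constant term `1`, and for every `w ∈ k⟦X₁,…,X_n⟧` one has
`w + (g X_{n+1})² + (X_{n+2} - (1/2)X₁⋯X_{n+1})² = w + X_{n+1}² + X_{n+2}² - X₁⋯X_{n+2}`.
Variables are indexed by `Fin (n+2)`, with `Xᵢ` (1-based) corresponding to index `i - 1`. -/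
theorem stmt4 (k : Type*) [Field k] [CharZero k] (n : ℕ) (hn : 1 ≤ n) :
    ∃ g : MvPowerSeries (Fin (n + 2)) k,
      constantCoeff (σ := Fin (n + 2)) (R := k) g = 1 ∧
      g ^ 2 = 1 - C (σ := Fin (n + 2)) (R := k) (1 / 4 : k) *
          (∏ i : Fin n, X (Fin.castLE (by omega) i) : MvPowerSeries (Fin (n + 2)) k) ^ 2 ∧
      ∀ w : MvPowerSeries (Fin (n + 2)) k,
        (∀ m : Fin (n + 2) →₀ ℕ, (∃ i : Fin (n + 2), n ≤ (i : ℕ) ∧ m i ≠ 0) →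
            coeff (R := k) m w = 0) →
        w + (g * X (⟨n, by omega⟩ : Fin (n + 2))) ^ 2 +
            (X (⟨n + 1, by omega⟩ : Fin (n + 2)) -
              C (σ := Fin (n + 2)) (R := k) (1 / 2 : k) *
                ∏ i : Fin (n + 1), X (Fin.castLE (by omega) i)) ^ 2 =
          w + X (⟨n, by omega⟩ : Fin (n + 2)) ^ 2 + X (⟨n + 1, by omega⟩ : Fin (n + 2)) ^ 2 -
            ∏ i : Fin (n + 2), X i := by
  classical
  have hle : n ≤ n + 2 := by omega
  set E : Fin (n+2) →₀ ℕ := ∑ i : Fin n, Finsupp.single (Fin.castLE hle i) 1 with hE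
  set P : MvPowerSeries (Fin (n+2)) k := ∏ i : Fin n, X (Fin.castLE hle i) with hPdef
  have hP : P = monomial (R := k) E 1 := prod_X_monomial _ _
  have hP2 : P ^ 2 = monomial (R := k) (E + E) 1 := by
    rw [pow_two, hP, monomial_mul_monomial, one_mul]
  have hCP : C (σ := Fin (n+2)) (R := k) (1/4 : k) * P ^ 2 = monomial (R := k) (E + E) (4⁻¹ : k) := by
    rw [hP2, ← monomial_zero_eq_C_apply, monomial_mul_monomial, zero_add, mul_one, one_div]
  have hEj0 : E ⟨0, by omega⟩ = 1 := by
    rw [hE, Finsupp.finset_sum_apply]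
    have : ∀ i : Fin n, (Finsupp.single (Fin.castLE hle i) 1) (⟨0, by omega⟩ : Fin (n+2)) =
        if i = (⟨0, hn⟩ : Fin n) then 1 else 0 := by
      intro i
      rw [Finsupp.single_apply]
      congr 1
      simp [Fin.ext_iff, Fin.castLE, eq_comm]
    simp_rw [this]
    simp
  have hDne : E + E ≠ 0 := by
    intro h
    have h2 : (E + E) (⟨0, by omega⟩ : Fin (n + 2)) = 0 := by rw [h]; rfl
    rw [Finsupp.add_apply, hEj0] at h2
    omega
  obtain ⟨g, hg1, hg2⟩ := exists_sqrt k (E + E) hDne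
  have hmain : g ^ 2 = 1 - C (σ := Fin (n+2)) (R := k) (1/4 : k) * P ^ 2 := by
    rw [hg2, hCP]
  refine ⟨g, hg1, hmain, ?_⟩
  intro w _
  have hP' : (∏ i : Fin (n + 1), (X (Fin.castLE (by omega : n + 1 ≤ n + 2) i) :
      MvPowerSeries (Fin (n+2)) k)) = P * X (⟨n, by omega⟩ : Fin (n + 2)) := by
    rw [Fin.prod_univ_castSucc]
    rfl
  have hfull : (∏ i : Fin (n + 2), (X i : MvPowerSeries (Fin (n+2)) k)) =
      (∏ i : Fin (n + 1), (X (Fin.castLE (by omega : n + 1 ≤ n + 2) i) :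
        MvPowerSeries (Fin (n+2)) k)) * X (⟨n + 1, by omega⟩ : Fin (n + 2)) := by
    rw [Fin.prod_univ_castSucc]
    rfl
  have hc : (C (σ := Fin (n+2)) (R := k) (1/2 : k)) * C (σ := Fin (n+2)) (R := k) (1/2 : k) =
      C (σ := Fin (n+2)) (R := k) (1/4 : k) := by
    rw [← map_mul]; norm_num
  have hc2 : (C (σ := Fin (n+2)) (R := k) (1/2 : k)) + C (σ := Fin (n+2)) (R := k) (1/2 : k) = 1 := by
    rw [← map_add]; norm_num
  rw [hfull, hP']
  set A : MvPowerSeries (Fin (n+2)) k := X (⟨n, by omega⟩ : Fin (n + 2)) with hA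
  set B : MvPowerSeries (Fin (n+2)) k := X (⟨n + 1, by omega⟩ : Fin (n + 2)) with hB
  linear_combination (A ^ 2) * hmain + (P ^ 2 * A ^ 2) * hc - (P * A * B) * hc2
end

section
/- Let a, b be coprime positive integers and i ∈ ℕ such that (a+b) divides (i+1). Then the set I(a,b,i) = {c ∈ ℕ : a ∤ (c+1), b ∤ (c+1), ⌊c/a⌋ + ⌊c/b⌋ = i} is empty. -/
/-!
Put `n = c + 1`. Since neither `a` nor `b` divides `n`, `⌊c/a⌋ = ⌊n/a⌋` and `⌊c/b⌋ = ⌊n/b⌋`, and the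
remainders `r = n % a`, `s = n % b` are positive. Modulo `a + b` we have `b ≡ -a`, so
`a * (⌊n/a⌋ + ⌊n/b⌋ + 1) ≡ (n - r) - (n - s) + a = s - r + a`, which lies strictly between `0` and
`a + b`; hence `a + b` cannot divide `⌊n/a⌋ + ⌊n/b⌋ + 1 = i + 1`.
-/

/-- The set `I(a,b,i)` indexing the first kind of basis elements of `HH^{-2i}`. -/
def Iset (a b i : ℕ) : Set ℕ :=
  {c | ¬ a ∣ (c + 1) ∧ ¬ b ∣ (c + 1) ∧ c / a + c / b = i}

theorem Nat.not_add_dvd_div_add_div_add_one {a b n : ℕ} (ha : 0 < a) (hb : 0 < b)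
    (hna : ¬ a ∣ n) (hnb : ¬ b ∣ n) : ¬ (a + b) ∣ n / a + n / b + 1 := by
  rintro ⟨k, hk⟩
  have hr : 0 < n % a := Nat.pos_of_ne_zero (mt Nat.dvd_of_mod_eq_zero hna)
  have hs : 0 < n % b := Nat.pos_of_ne_zero (mt Nat.dvd_of_mod_eq_zero hnb)
  have hra : n % a < a := Nat.mod_lt n ha
  have hsb : n % b < b := Nat.mod_lt n hb
  have hdvd : ((a + b : ℕ) : ℤ) ∣ (n % b : ℕ) + a - (n % a : ℕ) := by
    refine ⟨a * k - (n / b : ℕ), ?_⟩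
    have eb : ((b * (n / b) + n % b : ℕ) : ℤ) = n := congrArg _ (Nat.div_add_mod n b)
    have ea : ((a * (n / a) + n % a : ℕ) : ℤ) = n := congrArg _ (Nat.div_add_mod n a)
    have ek : ((n / a + n / b + 1 : ℕ) : ℤ) = ((a + b) * k : ℕ) := congrArg _ hk
    push_cast at eb ea ek ⊢
    linear_combination eb - ea + a * ek
  have hle := Int.le_of_dvd (by omega) hdvd
  omega

theorem stmt9_general (a b : ℕ) (ha : 0 < a) (hb : 0 < b) (i : ℕ)
    (h : (a + b) ∣ (i + 1)) : Iset a b i = ∅ := by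
  rw [Set.eq_empty_iff_forall_notMem]
  rintro c ⟨hca, hcb, hci⟩
  rw [← Nat.succ_div_of_not_dvd hca, ← Nat.succ_div_of_not_dvd hcb] at hci
  exact Nat.not_add_dvd_div_add_div_add_one ha hb hca hcb (hci ▸ h)

/-- For coprime positive `a, b`, if `(a+b) ∣ (i+1)` then `I(a,b,i)` is empty. -/
theorem stmt9 (a b : ℕ) (ha : 0 < a) (hb : 0 < b) (hab : Nat.Coprime a b) (i : ℕ)
    (h : (a + b) ∣ (i + 1)) : Iset a b i = ∅ :=
  stmt9_general a b ha hb i h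
end

section
/- Let e, f be coprime positive integers, ℓ a positive integer, and i ∈ ℕ such that (e+f) does not divide (i+1). Then the cardinality of I(eℓ, fℓ, i) equals ℓ times the cardinality of I(e, f, i), plus ℓ − 1; that is, |I(eℓ,fℓ,i)| = ℓ·|I(e,f,i)| + ℓ − 1. -/
/-- The interval `J(a,b,i)` without the divisibility constraints. -/
def Jset (a b i : ℕ) : Set ℕ := {c | c / a + c / b = i}

lemma val_mono (a b : ℕ) {c d : ℕ} (h : c ≤ d) : c/a + c/b ≤ d/a + d/b :=
  Nat.add_le_add (Nat.div_le_div_right h) (Nat.div_le_div_right h)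

lemma Jset_finite {a : ℕ} (ha : 0 < a) (b i : ℕ) : (Jset a b i).Finite := by
  apply Set.Finite.subset (Set.finite_Iio ((i+1)*a))
  intro c hc
  have hc' : c / a + c / b = i := hc
  have h1 : c / a < i + 1 := Nat.lt_succ_of_le (hc' ▸ Nat.le_add_right (c/a) (c/b))
  exact (Nat.div_lt_iff_lt_mul ha).mp h1

lemma Jset_nonempty {e f : ℕ} (he : 0 < e) (hf : 0 < f) (hef : Nat.Coprime e f)
    {i : ℕ} (h : ¬ (e + f) ∣ (i + 1)) : (Jset e f i).Nonempty := by
  by_contra hne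
  rw [Set.not_nonempty_iff_eq_empty] at hne
  have hex : ∃ c, i ≤ c/e + c/f :=
    ⟨e*i, by rw [Nat.mul_div_cancel_left i he]; exact Nat.le_add_right i _⟩
  classical
  obtain ⟨c, hcP, hcmin⟩ : ∃ c, (i ≤ c/e + c/f) ∧ ∀ d, d < c → d/e + d/f < i :=
    ⟨Nat.find hex, Nat.find_spec hex, fun d hd => Nat.lt_of_not_le (Nat.find_min hex hd)⟩
  have hcne : c/e + c/f ≠ i := by
    intro heq
    have hmem : c ∈ Jset e f i := heq
    rw [hne] at hmem
    exact Set.notMem_empty c hmem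
  have hc1 : i + 1 ≤ c/e + c/f := lt_of_le_of_ne hcP (Ne.symm hcne)
  have hcpos : 0 < c := by
    rcases Nat.eq_zero_or_pos c with h0 | h0
    · exfalso; rw [h0, Nat.zero_div, Nat.zero_div] at hc1; omega
    · exact h0
  obtain ⟨d, rfl⟩ : ∃ d, c = d + 1 := ⟨c - 1, by omega⟩
  have hdlt : d/e + d/f < i := hcmin d (Nat.lt_succ_self d)
  by_cases h1 : e ∣ d + 1
  · by_cases h2 : f ∣ d + 1
    · have e1 : (d+1)/e = d/e + 1 := Nat.succ_div_of_dvd h1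
      have e2 : (d+1)/f = d/f + 1 := Nat.succ_div_of_dvd h2
      have hval : (d+1)/e + (d+1)/f = i + 1 := by
        revert e1 e2 hc1 hdlt
        generalize (d+1)/e = A; generalize (d+1)/f = B
        generalize d/e = C; generalize d/f = D
        intros; omega
      have hefd : e * f ∣ d + 1 := hef.mul_dvd_of_dvd_of_dvd h1 h2
      obtain ⟨m, hm⟩ := hefd
      have hce : (d+1) / e = f * m := by
        rw [hm, Nat.mul_assoc, Nat.mul_div_cancel_left _ he]
      have hcf : (d+1) / f = e * m := by
        rw [hm, show e * f * m = f * (e * m) from by ring, Nat.mul_div_cancel_left _ hf]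
      exact h ⟨m, by rw [← hval, hce, hcf]; ring⟩
    · have e1 : (d+1)/e = d/e + 1 := Nat.succ_div_of_dvd h1
      have e2 : (d+1)/f = d/f := Nat.succ_div_of_not_dvd h2
      revert e1 e2 hc1 hdlt
      generalize (d+1)/e = A; generalize (d+1)/f = B
      generalize d/e = C; generalize d/f = D
      intros; omega
  · by_cases h2 : f ∣ d + 1
    · have e1 : (d+1)/e = d/e := Nat.succ_div_of_not_dvd h1
      have e2 : (d+1)/f = d/f + 1 := Nat.succ_div_of_dvd h2
      revert e1 e2 hc1 hdlt
      generalize (d+1)/e = A; generalize (d+1)/f = B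
      generalize d/e = C; generalize d/f = D
      intros; omega
    · have e1 : (d+1)/e = d/e := Nat.succ_div_of_not_dvd h1
      have e2 : (d+1)/f = d/f := Nat.succ_div_of_not_dvd h2
      revert e1 e2 hc1 hdlt
      generalize (d+1)/e = A; generalize (d+1)/f = B
      generalize d/e = C; generalize d/f = D
      intros; omega

/-- There is a unique "bad" element in `Jset`, namely its maximum. -/
lemma bad_unique {a b i : ℕ} (ha : 0 < a) (_hb : 0 < b)
    (hne : (Jset a b i).Nonempty) :
    ∃ q ∈ Jset a b i, (a ∣ q+1 ∨ b ∣ q+1) ∧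
      ∀ c ∈ Jset a b i, (a ∣ c+1 ∨ b ∣ c+1) → c = q := by
  obtain ⟨q, hq, hqmax'⟩ := Set.Finite.exists_maximalFor id _ (Jset_finite ha b i) hne
  simp only [id] at hqmax'
  have hqmax : ∀ c ∈ Jset a b i, c ≤ q := by
    intro c hc
    by_contra hlt
    push_neg at hlt
    have := hqmax' (j := c) hc (le_of_lt hlt)
    omega
  have hq' : q / a + q / b = i := hq
  have hjump : a ∣ q+1 ∨ b ∣ q+1 := by
    by_contra hnd
    push_neg at hnd
    have e1 : (q+1)/a = q/a := Nat.succ_div_of_not_dvd hnd.1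
    have e2 : (q+1)/b = q/b := Nat.succ_div_of_not_dvd hnd.2
    have hmem : q + 1 ∈ Jset a b i := by
      show (q+1)/a + (q+1)/b = i
      rw [e1, e2]; exact hq'
    have := hqmax _ hmem
    omega
  refine ⟨q, hq, hjump, ?_⟩
  intro c hc hcd
  by_contra hne'
  have hcq : c < q := lt_of_le_of_ne (hqmax c hc) hne'
  have hc' : c / a + c / b = i := hc
  have hj1 : i + 1 ≤ (c+1)/a + (c+1)/b := by
    rcases hcd with h1 | h1
    · have e1 : (c+1)/a = c/a + 1 := Nat.succ_div_of_dvd h1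
      have e2 : c/b ≤ (c+1)/b := Nat.div_le_div_right (Nat.le_succ c)
      revert e1 e2 hc'
      generalize (c+1)/a = A; generalize (c+1)/b = B
      generalize c/a = C; generalize c/b = D
      intros; omega
    · have e1 : (c+1)/b = c/b + 1 := Nat.succ_div_of_dvd h1
      have e2 : c/a ≤ (c+1)/a := Nat.div_le_div_right (Nat.le_succ c)
      revert e1 e2 hc'
      generalize (c+1)/a = A; generalize (c+1)/b = B
      generalize c/a = C; generalize c/b = D
      intros; omega
  have h2 := val_mono a b (show c + 1 ≤ q from hcq)
  rw [hq'] at h2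
  exact Nat.not_succ_le_self i (le_trans hj1 h2)

lemma Iset_eq {a b i : ℕ} (ha : 0 < a) (hb : 0 < b) (hne : (Jset a b i).Nonempty) :
    ∃ q ∈ Jset a b i, Iset a b i = Jset a b i \ {q} := by
  obtain ⟨q, hq, hqd, huniq⟩ := bad_unique ha hb hne
  refine ⟨q, hq, ?_⟩
  ext c
  simp only [Iset, Jset, Set.mem_setOf_eq, Set.mem_diff, Set.mem_singleton_iff]
  constructor
  · rintro ⟨h1, h2, h3⟩
    refine ⟨h3, ?_⟩
    rintro rfl
    rcases hqd with hd | hd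
    · exact h1 hd
    · exact h2 hd
  · rintro ⟨h3, hne'⟩
    refine ⟨?_, ?_, h3⟩
    · intro hd; exact hne' (huniq c h3 (Or.inl hd))
    · intro hd; exact hne' (huniq c h3 (Or.inr hd))

lemma div_scale {e ℓ : ℕ} (hℓ : 0 < ℓ) (q r : ℕ) (hr : r < ℓ) :
    (q * ℓ + r) / (e * ℓ) = q / e := by
  rw [Nat.mul_comm e ℓ, ← Nat.div_div_eq_div_mul,
    Nat.add_comm, Nat.add_mul_div_right _ _ hℓ, Nat.div_eq_of_lt hr, Nat.zero_add]

lemma Jset_scale_eq (e f : ℕ) {ℓ : ℕ} (hℓ : 0 < ℓ) (i : ℕ) :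
    Jset (e*ℓ) (f*ℓ) i = (fun p : ℕ × ℕ => p.1 * ℓ + p.2) '' (Jset e f i ×ˢ Set.Iio ℓ) := by
  ext c
  simp only [Jset, Set.mem_setOf_eq, Set.mem_image, Set.mem_prod, Set.mem_Iio, Prod.exists]
  constructor
  · intro hc
    refine ⟨c / ℓ, c % ℓ, ⟨?_, Nat.mod_lt _ hℓ⟩, ?_⟩
    · show c / ℓ / e + c / ℓ / f = i
      rw [Nat.div_div_eq_div_mul, Nat.div_div_eq_div_mul, Nat.mul_comm ℓ e, Nat.mul_comm ℓ f]
      exact hc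
    · rw [Nat.mul_comm, Nat.div_add_mod]
  · rintro ⟨q, r, ⟨hq, hr⟩, rfl⟩
    show (q * ℓ + r) / (e * ℓ) + (q * ℓ + r) / (f * ℓ) = i
    rw [div_scale hℓ q r hr, div_scale hℓ q r hr]
    exact hq

lemma Jset_scale {e f : ℕ} (he : 0 < e) (_hf : 0 < f) {ℓ : ℕ} (hℓ : 0 < ℓ) (i : ℕ) :
    (Jset (e*ℓ) (f*ℓ) i).ncard = ℓ * (Jset e f i).ncard := by
  rw [Jset_scale_eq e f hℓ i]
  have hinj : Set.InjOn (fun p : ℕ × ℕ => p.1 * ℓ + p.2) (Jset e f i ×ˢ Set.Iio ℓ) := by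
    rintro ⟨q, r⟩ ⟨hq, hr⟩ ⟨q', r'⟩ ⟨hq', hr'⟩ heq
    have heq' : q * ℓ + r = q' * ℓ + r' := heq
    have hr2 : r < ℓ := hr
    have hr2' : r' < ℓ := hr'
    have h1 : q = q' := by
      have e1 : (q * ℓ + r) / ℓ = q := by
        rw [Nat.add_comm, Nat.add_mul_div_right _ _ hℓ, Nat.div_eq_of_lt hr2, Nat.zero_add]
      have e2 : (q' * ℓ + r') / ℓ = q' := by
        rw [Nat.add_comm, Nat.add_mul_div_right _ _ hℓ, Nat.div_eq_of_lt hr2', Nat.zero_add]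
      rw [← e1, ← e2, heq']
    subst h1
    have h2 : r = r' := Nat.add_left_cancel heq'
    rw [h2]
  rw [Set.ncard_image_of_injOn hinj]
  have hfin : (Jset e f i).Finite := Jset_finite he f i
  have hset : (Jset e f i ×ˢ Set.Iio ℓ)
      = ((hfin.toFinset ×ˢ Finset.range ℓ : Finset (ℕ × ℕ)) : Set (ℕ × ℕ)) := by
    ext ⟨q, r⟩
    simp [Set.Finite.mem_toFinset, Finset.mem_product]
  rw [hset, Set.ncard_coe_finset, Finset.card_product, Finset.card_range,
    Set.ncard_eq_toFinset_card _ hfin, Nat.mul_comm]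

/-- For coprime positive `e, f`, positive `ℓ`, and `i` with `(e+f) ∤ (i+1)`, one has
`|I(eℓ,fℓ,i)| = ℓ·|I(e,f,i)| + ℓ - 1`. -/
theorem stmt11 (e f : ℕ) (he : 0 < e) (hf : 0 < f) (hef : Nat.Coprime e f)
    (ℓ : ℕ) (hℓ : 0 < ℓ) (i : ℕ) (h : ¬ (e + f) ∣ (i + 1)) :
    (Iset (e * ℓ) (f * ℓ) i).ncard = ℓ * (Iset e f i).ncard + ℓ - 1 := by
  have heℓ : 0 < e * ℓ := Nat.mul_pos he hℓ
  have hfℓ : 0 < f * ℓ := Nat.mul_pos hf hℓ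
  have hne : (Jset e f i).Nonempty := Jset_nonempty he hf hef h
  have hne2 : (Jset (e*ℓ) (f*ℓ) i).Nonempty := by
    obtain ⟨q, hq⟩ := hne
    rw [Jset_scale_eq e f hℓ i]
    exact ⟨q * ℓ + 0, Set.mem_image_of_mem _ (show (q, 0) ∈ Jset e f i ×ˢ Set.Iio ℓ from ⟨hq, hℓ⟩)⟩
  have hfin1 : (Jset e f i).Finite := Jset_finite he f i
  have hfin2 : (Jset (e*ℓ) (f*ℓ) i).Finite := Jset_finite heℓ (f*ℓ) i
  obtain ⟨q1, hq1, hI1⟩ := Iset_eq he hf hne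
  obtain ⟨q2, hq2, hI2⟩ := Iset_eq heℓ hfℓ hne2
  have c1 : (Iset e f i).ncard = (Jset e f i).ncard - 1 := by
    rw [hI1]; exact Set.ncard_diff_singleton_of_mem hq1
  have c2 : (Iset (e*ℓ) (f*ℓ) i).ncard = (Jset (e*ℓ) (f*ℓ) i).ncard - 1 := by
    rw [hI2]; exact Set.ncard_diff_singleton_of_mem hq2
  have hpos : 0 < (Jset e f i).ncard := (Set.ncard_pos hfin1).mpr hne
  rw [c1, c2, Jset_scale he hf hℓ i]
  obtain ⟨m, hm⟩ : ∃ m, (Jset e f i).ncard = m + 1 := ⟨(Jset e f i).ncard - 1, by omega⟩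
  rw [hm, Nat.add_sub_cancel, Nat.mul_add, Nat.mul_one]
end

section
/- For positive integers a, b and i ∈ ℕ, define h(a,b,i) = |I(a,b,i)| + (gcd(a,b) − 1)·|II(a,b,i)|, where I(a,b,i) = {c ∈ ℕ : a ∤ (c+1), b ∤ (c+1), ⌊c/a⌋ + ⌊c/b⌋ = i} and II(a,b,i) = {c ∈ ℕ : ∃ n₁, n₂ ∈ ℕ with n₁ + n₂ = i + 1 and c + 1 = a·n₁ = b·n₂}. Then for all coprime positive integers e, f, every positive integer ℓ, and every i ∈ ℕ, one has h(eℓ, fℓ, i) = ℓ·h(e, f, i) + ℓ − 1. -/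
/-- The set `II(a,b,i)` indexing the second kind of basis elements of `HH^{-2i}`. -/
def IIset (a b i : ℕ) : Set ℕ :=
  {c | ∃ n₁ n₂ : ℕ, n₁ + n₂ = i + 1 ∧ c + 1 = a * n₁ ∧ c + 1 = b * n₂}

/-- `h(a,b,i) = dim HH^{-2i}` of the category of equivariant matrix factorizations of
`x₁^a + x₂^b + x₃² + x₄²`. -/
noncomputable def hdim (a b i : ℕ) : ℕ :=
  (Iset a b i).ncard + (Nat.gcd a b - 1) * (IIset a b i).ncard

lemma predDiv {e m : ℕ} (he : 0 < e) (hm : 0 < m) : (e * m - 1) / e = m - 1 := by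
  obtain ⟨m', rfl⟩ : ∃ m', m = m' + 1 := ⟨m - 1, by omega⟩
  have h1 : e * (m' + 1) - 1 = e * m' + (e - 1) := by
    have : e * (m' + 1) = e * m' + e := by ring
    omega
  rw [h1, Nat.mul_add_div he, Nat.div_eq_of_lt (by omega)]
  omega

lemma noLevel {e f : ℕ} (he : 0 < e) (hf : 0 < f) {i k : ℕ}
    (hk : i + 1 = k * (e + f)) (q : ℕ) : q / e + q / f ≠ i := by
  have hk1 : 0 < k := by
    rcases Nat.eq_zero_or_pos k with h | h
    · subst h; simp at hk
    · exact h
  intro hq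
  have he1 : k * e * f = e * (f * k) := by ring
  have he2 : k * e * f = f * (e * k) := by ring
  have he3 : k * (e + f) = e * k + f * k := by ring
  rcases lt_or_ge q (k * e * f) with h | h
  · have hq1 : q / e ≤ (e * (f * k) - 1) / e := Nat.div_le_div_right (by omega)
    have hq2 : q / f ≤ (f * (e * k) - 1) / f := Nat.div_le_div_right (by omega)
    rw [predDiv he (by positivity)] at hq1
    rw [predDiv hf (by positivity)] at hq2
    have hfk : 0 < f * k := by positivity
    have hek : 0 < e * k := by positivity
    omega
  · have hq1 : (e * (f * k)) / e ≤ q / e := Nat.div_le_div_right (by omega)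
    have hq2 : (f * (e * k)) / f ≤ q / f := Nat.div_le_div_right (by omega)
    rw [Nat.mul_div_cancel_left _ he] at hq1
    rw [Nat.mul_div_cancel_left _ hf] at hq2
    omega

lemma exists_q0 {e f : ℕ} (he : 0 < e) (hf : 0 < f) (hef : Nat.Coprime e f) {i : ℕ}
    (hi : ¬ (e + f) ∣ (i + 1)) :
    ∃ q₀, (q₀ / e + q₀ / f = i) ∧ (e ∣ q₀ + 1 ∨ f ∣ q₀ + 1) ∧
      ∀ q, q / e + q / f = i → (e ∣ q + 1 ∨ f ∣ q + 1) → q = q₀ := by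
  classical
  obtain ⟨q₀, hq₀def⟩ :
      ∃ q₀, q₀ = Nat.findGreatest (fun q => q / e + q / f ≤ i) (e * (i + 1)) := ⟨_, rfl⟩
  have hPq₀ : q₀ / e + q₀ / f ≤ i := by
    rw [hq₀def]
    exact Nat.findGreatest_spec (P := fun q => q / e + q / f ≤ i) (Nat.zero_le _) (by simp)
  have hNP : ¬ ((e * (i + 1)) / e + (e * (i + 1)) / f ≤ i) := by
    rw [Nat.mul_div_cancel_left _ he]
    have h0 : 0 ≤ (e * (i + 1)) / f := Nat.zero_le _
    omega
  have hle : q₀ ≤ e * (i + 1) := by rw [hq₀def]; exact Nat.findGreatest_le _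
  have hlt : q₀ < e * (i + 1) := lt_of_le_of_ne hle (fun h => hNP (h ▸ hPq₀))
  have hP1 : ¬ ((q₀ + 1) / e + (q₀ + 1) / f ≤ i) :=
    Nat.findGreatest_is_greatest (P := fun q => q / e + q / f ≤ i)
      (k := q₀ + 1) (by rw [← hq₀def]; omega) (by omega)
  have hse := Nat.succ_div (a := q₀) (b := e)
  have hsf := Nat.succ_div (a := q₀) (b := f)
  have hkey : q₀ / e + q₀ / f = i ∧ (e ∣ q₀ + 1 ∨ f ∣ q₀ + 1) := by
    by_cases hde : e ∣ q₀ + 1 <;> by_cases hdf : f ∣ q₀ + 1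
    · -- both divide
      have hdef : e * f ∣ q₀ + 1 := Nat.Coprime.mul_dvd_of_dvd_of_dvd hef hde hdf
      obtain ⟨k, hk⟩ := hdef
      have hkpos : 0 < k := by
        rcases Nat.eq_zero_or_pos k with h | h
        · subst h; simp at hk
        · exact h
      have hqe : q₀ / e = f * k - 1 := by
        have h1 : q₀ = e * (f * k) - 1 := by
          have : e * f * k = e * (f * k) := by ring
          omega
        rw [h1]; exact predDiv he (by positivity)
      have hqf : q₀ / f = e * k - 1 := by
        have h1 : q₀ = f * (e * k) - 1 := by
          have : e * f * k = f * (e * k) := by ring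
          omega
        rw [h1]; exact predDiv hf (by positivity)
      rw [if_pos hde] at hse
      rw [if_pos hdf] at hsf
      have hek : 0 < e * k := by positivity
      have hfk : 0 < f * k := by positivity
      by_cases hcase : i + 1 = f * k + e * k
      · exact absurd ⟨k, by rw [hcase]; ring⟩ hi
      · exact ⟨by omega, Or.inl hde⟩
    · rw [if_pos hde] at hse
      rw [if_neg hdf] at hsf
      exact ⟨by omega, Or.inl hde⟩
    · rw [if_neg hde] at hse
      rw [if_pos hdf] at hsf
      exact ⟨by omega, Or.inr hdf⟩
    · rw [if_neg hde] at hse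
      rw [if_neg hdf] at hsf
      omega
  obtain ⟨hgi, hsp⟩ := hkey
  refine ⟨q₀, hgi, hsp, fun q hq hqs => ?_⟩
  rcases lt_trichotomy q q₀ with h | h | h
  · exfalso
    have hm1 : (q + 1) / e + (q + 1) / f ≤ q₀ / e + q₀ / f :=
      Nat.add_le_add (Nat.div_le_div_right (by omega)) (Nat.div_le_div_right (by omega))
    have hse' := Nat.succ_div (a := q) (b := e)
    have hsf' := Nat.succ_div (a := q) (b := f)
    have hmono_e : q / e ≤ (q + 1) / e := Nat.div_le_div_right (by omega)
    have hmono_f : q / f ≤ (q + 1) / f := Nat.div_le_div_right (by omega)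
    rcases hqs with h2 | h2
    · rw [if_pos h2] at hse'; omega
    · rw [if_pos h2] at hsf'; omega
  · exact h
  · exfalso
    have hm1 : (q₀ + 1) / e + (q₀ + 1) / f ≤ q / e + q / f :=
      Nat.add_le_add (Nat.div_le_div_right (by omega)) (Nat.div_le_div_right (by omega))
    omega

lemma mod_top {ℓ c : ℕ} (hℓ : 0 < ℓ) (hm : c % ℓ = ℓ - 1) : c + 1 = ℓ * (c / ℓ + 1) := by
  have hmd := Nat.mod_add_div c ℓ
  have h2 : ℓ * (c / ℓ + 1) = ℓ * (c / ℓ) + ℓ := by ring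
  omega

lemma dvd_char {ℓ : ℕ} (hℓ : 0 < ℓ) (e c : ℕ) :
    e * ℓ ∣ c + 1 ↔ c % ℓ = ℓ - 1 ∧ e ∣ c / ℓ + 1 := by
  have hmd := Nat.mod_add_div c ℓ
  have hmlt : c % ℓ < ℓ := Nat.mod_lt _ hℓ
  constructor
  · rintro ⟨t, ht⟩
    have hm : c % ℓ = ℓ - 1 := by
      have hd : ℓ ∣ c % ℓ + 1 := by
        have h1 : c % ℓ + 1 = (c + 1) - ℓ * (c / ℓ) := by omega
        rw [h1, ht]
        exact Nat.dvd_sub ⟨e * t, by ring⟩ (Dvd.intro _ rfl)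
      obtain ⟨s, hs⟩ := hd
      have hs1 : 1 ≤ s := by
        rcases Nat.eq_zero_or_pos s with h | h
        · subst h; simp at hs
        · exact h
      have hs2 : s ≤ 1 := by
        by_contra h3
        have h4 : ℓ * 2 ≤ ℓ * s := Nat.mul_le_mul_left ℓ (by omega)
        omega
      have : s = 1 := le_antisymm hs2 hs1
      subst this
      simp only [mul_one] at hs
      omega
    have hc1 : c + 1 = ℓ * (c / ℓ + 1) := mod_top hℓ hm
    refine ⟨hm, t, ?_⟩
    have h3 : ℓ * (c / ℓ + 1) = ℓ * (e * t) := by rw [← hc1, ht]; ring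
    exact Nat.eq_of_mul_eq_mul_left hℓ h3
  · rintro ⟨hm, t, ht⟩
    refine ⟨t, ?_⟩
    rw [mod_top hℓ hm, ht]; ring

lemma II_empty {e f : ℕ} (hf : 0 < f) (hef : Nat.Coprime e f) {ℓ : ℕ}
    (hℓ : 0 < ℓ) {i : ℕ} (hi : ¬ (e + f) ∣ (i + 1)) : IIset (e * ℓ) (f * ℓ) i = ∅ := by
  ext c
  simp only [IIset, Set.mem_setOf_eq, Set.mem_empty_iff_false, iff_false]
  rintro ⟨n₁, n₂, hsum, h1, h2⟩
  have h3 : e * n₁ = f * n₂ := by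
    have h4 : (e * n₁) * ℓ = (f * n₂) * ℓ := by
      have h5 : e * ℓ * n₁ = f * ℓ * n₂ := by omega
      calc (e * n₁) * ℓ = e * ℓ * n₁ := by ring
        _ = f * ℓ * n₂ := h5
        _ = (f * n₂) * ℓ := by ring
    exact Nat.eq_of_mul_eq_mul_right hℓ h4
  have h5 : f ∣ n₁ := Nat.Coprime.dvd_of_dvd_mul_left hef.symm ⟨n₂, h3⟩
  obtain ⟨m, hm⟩ := h5
  have h6 : n₂ = e * m := by
    have h7 : f * (e * m) = f * n₂ := by rw [← h3, hm]; ring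
    exact (Nat.eq_of_mul_eq_mul_left hf h7).symm
  exact hi ⟨m, by rw [← hsum, hm, h6]; ring⟩

lemma II_single {e f : ℕ} (he : 0 < e) (hf : 0 < f) (hef : Nat.Coprime e f) {ℓ : ℕ}
    (hℓ : 0 < ℓ) {i k : ℕ} (hk : i + 1 = k * (e + f)) :
    IIset (e * ℓ) (f * ℓ) i = {e * ℓ * (f * k) - 1} := by
  have hkpos : 0 < k := by
    rcases Nat.eq_zero_or_pos k with h | h
    · subst h; simp at hk
    · exact h
  ext c
  simp only [IIset, Set.mem_setOf_eq, Set.mem_singleton_iff]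
  constructor
  · rintro ⟨n₁, n₂, hsum, h1, h2⟩
    have h3 : e * n₁ = f * n₂ := by
      have h4 : (e * n₁) * ℓ = (f * n₂) * ℓ := by
        have h5 : e * ℓ * n₁ = f * ℓ * n₂ := by omega
        calc (e * n₁) * ℓ = e * ℓ * n₁ := by ring
          _ = f * ℓ * n₂ := h5
          _ = (f * n₂) * ℓ := by ring
      exact Nat.eq_of_mul_eq_mul_right hℓ h4
    have h5 : f ∣ n₁ := Nat.Coprime.dvd_of_dvd_mul_left hef.symm ⟨n₂, h3⟩
    obtain ⟨m, hm⟩ := h5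
    have h6 : n₂ = e * m := by
      have h7 : f * (e * m) = f * n₂ := by rw [← h3, hm]; ring
      exact (Nat.eq_of_mul_eq_mul_left hf h7).symm
    have h8 : (e + f) * m = (e + f) * k := by
      have hx1 : i + 1 = (e + f) * m := by rw [← hsum, hm, h6]; ring
      have hx2 : k * (e + f) = (e + f) * k := by ring
      omega
    have h9 : m = k := Nat.eq_of_mul_eq_mul_left (by omega) h8
    have h10 : e * ℓ * n₁ = e * ℓ * (f * k) := by rw [hm, h9]
    omega
  · rintro rfl
    have hp : 0 < e * ℓ * (f * k) := by positivity
    refine ⟨f * k, e * k, ?_, ?_, ?_⟩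
    · rw [hk]; ring
    · omega
    · have h11 : e * ℓ * (f * k) = f * ℓ * (e * k) := by ring
      omega

lemma I_empty {e f : ℕ} (he : 0 < e) (hf : 0 < f) {ℓ : ℕ} (hℓ : 0 < ℓ) {i k : ℕ}
    (hk : i + 1 = k * (e + f)) : Iset (e * ℓ) (f * ℓ) i = ∅ := by
  ext c
  simp only [Iset, Set.mem_setOf_eq, Set.mem_empty_iff_false, iff_false]
  rintro ⟨-, -, h3⟩
  have hd1 : c / (e * ℓ) = c / ℓ / e := by rw [Nat.div_div_eq_div_mul, mul_comm]
  have hd2 : c / (f * ℓ) = c / ℓ / f := by rw [Nat.div_div_eq_div_mul, mul_comm]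
  exact noLevel he hf hk (c / ℓ) (by rw [← hd1, ← hd2]; exact h3)

lemma parts_eq {ℓ q r q' r' : ℕ} (h : q * ℓ + r = q' * ℓ + r') (h1 : r < ℓ) (h2 : r' < ℓ) :
    q = q' ∧ r = r' := by
  have h3 := congrArg (· / ℓ) h
  simp only [mul_comm _ ℓ, Nat.mul_add_div (by omega : 0 < ℓ)] at h3
  rw [Nat.div_eq_of_lt h1, Nat.div_eq_of_lt h2] at h3
  have hq : q = q' := by omega
  subst hq
  omega

lemma I_card {e f : ℕ} (he : 0 < e) (hf : 0 < f) (hef : Nat.Coprime e f) {ℓ : ℕ}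
    (hℓ : 0 < ℓ) {i : ℕ} (hi : ¬ (e + f) ∣ (i + 1)) :
    ∃ n : ℕ, 0 < n ∧ (Iset e f i).ncard = n - 1 ∧
      (Iset (e * ℓ) (f * ℓ) i).ncard = n * ℓ - 1 := by
  classical
  obtain ⟨q₀, hq₀, hsp, huniq⟩ := exists_q0 he hf hef hi
  set QF : Finset ℕ := (Finset.range (e * (i + 1))).filter (fun q => q / e + q / f = i)
    with hQF
  have hmemQ : ∀ q, q ∈ QF ↔ q / e + q / f = i := by
    intro q
    simp only [hQF, Finset.mem_filter, Finset.mem_range]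
    constructor
    · exact fun h => h.2
    · intro h
      refine ⟨?_, h⟩
      have h1 : q / e < i + 1 := by
        have h0 : q / e ≤ q / e + q / f := Nat.le_add_right _ _
        omega
      have h2 := (Nat.div_lt_iff_lt_mul he).mp h1
      have h3 : (i + 1) * e = e * (i + 1) := by ring
      omega
  have hq₀Q : q₀ ∈ QF := (hmemQ q₀).mpr hq₀
  have hIs : Iset e f i = ↑(QF.erase q₀) := by
    ext q
    simp only [Iset, Set.mem_setOf_eq, Finset.coe_erase, Set.mem_diff, Finset.mem_coe,
      hmemQ, Set.mem_singleton_iff]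
    constructor
    · rintro ⟨h1, h2, h3⟩
      refine ⟨h3, fun h => ?_⟩
      subst h
      rcases hsp with h4 | h4
      · exact h1 h4
      · exact h2 h4
    · rintro ⟨h3, h4⟩
      refine ⟨fun h => h4 (huniq q h3 (Or.inl h)), fun h => h4 (huniq q h3 (Or.inr h)), h3⟩
  have hcard1 : (Iset e f i).ncard = QF.card - 1 := by
    rw [hIs, Set.ncard_coe_finset, Finset.card_erase_of_mem hq₀Q]
  set BF : Finset ℕ :=
    ((QF ×ˢ Finset.range ℓ).erase (q₀, ℓ - 1)).image (fun p => p.1 * ℓ + p.2) with hBF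
  have hIb : Iset (e * ℓ) (f * ℓ) i = ↑BF := by
    ext c
    simp only [hBF, Finset.coe_image, Set.mem_image, Finset.mem_coe, Finset.mem_erase,
      Finset.mem_product, Finset.mem_range, Iset, Set.mem_setOf_eq]
    constructor
    · rintro ⟨h1, h2, h3⟩
      have hd1 : c / (e * ℓ) = c / ℓ / e := by rw [Nat.div_div_eq_div_mul, mul_comm]
      have hd2 : c / (f * ℓ) = c / ℓ / f := by rw [Nat.div_div_eq_div_mul, mul_comm]
      refine ⟨(c / ℓ, c % ℓ), ⟨?_, ?_, Nat.mod_lt _ hℓ⟩, ?_⟩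
      · intro hcontr
        have hq : c / ℓ = q₀ := congrArg Prod.fst hcontr
        have hr : c % ℓ = ℓ - 1 := congrArg Prod.snd hcontr
        rcases hsp with h4 | h4
        · exact h1 ((dvd_char hℓ e c).mpr ⟨hr, by rw [hq]; exact h4⟩)
        · exact h2 ((dvd_char hℓ f c).mpr ⟨hr, by rw [hq]; exact h4⟩)
      · exact (hmemQ _).mpr (by rw [← hd1, ← hd2]; exact h3)
      · show c / ℓ * ℓ + c % ℓ = c
        have h5 := Nat.div_add_mod c ℓ
        have h6 : ℓ * (c / ℓ) = c / ℓ * ℓ := by ring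
        omega
    · rintro ⟨⟨q, r⟩, ⟨hne, hQ, hr⟩, rfl⟩
      have hQ' : q ∈ QF := hQ
      have hr' : r < ℓ := hr
      have hcq : (q * ℓ + r) / ℓ = q := by
        rw [mul_comm, Nat.mul_add_div hℓ, Nat.div_eq_of_lt hr', add_zero]
      have hcr : (q * ℓ + r) % ℓ = r := by
        rw [mul_comm, Nat.mul_add_mod, Nat.mod_eq_of_lt hr']
      have hlev : q / e + q / f = i := (hmemQ q).mp hQ'
      show ¬ e * ℓ ∣ q * ℓ + r + 1 ∧ ¬ f * ℓ ∣ q * ℓ + r + 1 ∧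
        (q * ℓ + r) / (e * ℓ) + (q * ℓ + r) / (f * ℓ) = i
      have hd1 : (q * ℓ + r) / (e * ℓ) = q / e := by
        rw [mul_comm e ℓ, ← Nat.div_div_eq_div_mul, hcq]
      have hd2 : (q * ℓ + r) / (f * ℓ) = q / f := by
        rw [mul_comm f ℓ, ← Nat.div_div_eq_div_mul, hcq]
      refine ⟨?_, ?_, by rw [hd1, hd2]; exact hlev⟩
      · intro hd
        obtain ⟨hm, hdq⟩ := (dvd_char hℓ e _).mp hd
        rw [hcr] at hm
        rw [hcq] at hdq
        exact hne (by rw [huniq q hlev (Or.inl hdq), hm])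
      · intro hd
        obtain ⟨hm, hdq⟩ := (dvd_char hℓ f _).mp hd
        rw [hcr] at hm
        rw [hcq] at hdq
        exact hne (by rw [huniq q hlev (Or.inr hdq), hm])
  have hq₀mem : (q₀, ℓ - 1) ∈ QF ×ˢ Finset.range ℓ := by
    rw [Finset.mem_product]
    exact ⟨hq₀Q, Finset.mem_range.mpr (by omega)⟩
  have hinj : Set.InjOn (fun p : ℕ × ℕ => p.1 * ℓ + p.2)
      ↑((QF ×ˢ Finset.range ℓ).erase (q₀, ℓ - 1)) := by
    rintro ⟨q, r⟩ hp ⟨q', r'⟩ hp' h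
    have hr1 : r < ℓ :=
      Finset.mem_range.mp (Finset.mem_product.mp (Finset.mem_erase.mp hp).2).2
    have hr2 : r' < ℓ :=
      Finset.mem_range.mp (Finset.mem_product.mp (Finset.mem_erase.mp hp').2).2
    obtain ⟨hq, hr⟩ : q = q' ∧ r = r' := parts_eq h hr1 hr2
    subst hq; subst hr; rfl
  have hcard2 : (Iset (e * ℓ) (f * ℓ) i).ncard = QF.card * ℓ - 1 := by
    rw [hIb, Set.ncard_coe_finset, hBF, Finset.card_image_of_injOn hinj,
      Finset.card_erase_of_mem hq₀mem, Finset.card_product, Finset.card_range]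
  exact ⟨QF.card, Finset.card_pos.mpr ⟨q₀, hq₀Q⟩, hcard1, hcard2⟩

/-- Proposition 5.14: `h(eℓ, fℓ, i) = ℓ·h(e,f,i) + ℓ - 1` for coprime positive `e, f` and
positive `ℓ`. -/
theorem stmt12 (e f : ℕ) (he : 0 < e) (hf : 0 < f) (hef : Nat.Coprime e f)
    (ℓ : ℕ) (hℓ : 0 < ℓ) (i : ℕ) :
    hdim (e * ℓ) (f * ℓ) i = ℓ * hdim e f i + ℓ - 1 := by
  have hgcd : Nat.gcd (e * ℓ) (f * ℓ) = ℓ := by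
    rw [Nat.gcd_mul_right, Nat.Coprime.gcd_eq_one hef, one_mul]
  have hgcd1 : Nat.gcd e f = 1 := Nat.Coprime.gcd_eq_one hef
  by_cases hdvd : (e + f) ∣ (i + 1)
  · obtain ⟨k, hk0⟩ := hdvd
    have hk : i + 1 = k * (e + f) := by rw [hk0]; ring
    have hI1 : Iset (e * ℓ) (f * ℓ) i = ∅ := I_empty he hf hℓ hk
    have hI2 : Iset e f i = ∅ := by
      have h := I_empty he hf (ℓ := 1) one_pos hk
      rwa [mul_one, mul_one] at h
    have hII1 := II_single he hf hef hℓ hk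
    have hII2 : IIset e f i = {e * (f * k) - 1} := by
      have h := II_single he hf hef (ℓ := 1) one_pos hk
      rwa [mul_one, mul_one] at h
    rw [hdim, hdim, hgcd, hgcd1, hI1, hI2, hII1, hII2]
    simp only [Set.ncard_empty, Set.ncard_singleton]
    omega
  · obtain ⟨n, hn, h1, h2⟩ := I_card he hf hef hℓ hdvd
    have hII1 : IIset (e * ℓ) (f * ℓ) i = ∅ := II_empty hf hef hℓ hdvd
    have hII2 : IIset e f i = ∅ := by
      have h := II_empty hf hef (ℓ := 1) one_pos hdvd
      rwa [mul_one, mul_one] at h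
    rw [hdim, hdim, h1, h2, hII1, hII2]
    simp only [Set.ncard_empty, Nat.mul_zero, Nat.add_zero]
    obtain ⟨m, rfl⟩ : ∃ m, n = m + 1 := ⟨n - 1, by omega⟩
    have hh : (m + 1) * ℓ = ℓ * m + ℓ := by ring
    have hh2 : ℓ * (m + 1 - 1) = ℓ * m := by norm_num
    omega
end
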